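/- (Theorem 3.3, scalar form) Let ω ∈ (0,1) and μ > 0. Then P_μ(ω) := I_m + μ·S(ω)·D and A_μ := I_m + μ·Iinv·D are invertible, the characteristic polynomial of P_μ(ω)⁻¹A_μ equals (X − 1)^{m−1}·(X − 2/(2 − ω·z(μ))), and the non-unit eigenvalue satisfies 2/(2 − ω·z(μ)) ∈ [1, 1/(1−ω)), where z(μ) := eᵀ(μ⁻¹D⁻¹ + Iinv)⁻¹e ∈ [0,2). -/
import Mathlib


open Matrix

/-- The sinc integrand `sin(πt)/(πt)`, extended by the value 1 at `t = 0`. -/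
noncomputable def sincFn (t : ℝ) : ℝ :=
  if t = 0 then 1 else Real.sin (Real.pi * t) / (Real.pi * t)

/-- The `m × m` Toeplitz matrix `Iinv(k,l) = 1/2 + ∫₀^{k-l} sin(πt)/(πt) dt`. -/
noncomputable def IinvMat (m : ℕ) : Matrix (Fin m) (Fin m) ℝ :=
  fun k l => 1 / 2 + ∫ t in (0 : ℝ)..((k : ℝ) - (l : ℝ)), sincFn t

/-- The skew-symmetric part `S = (Iinv - Iinvᵀ)/2`. -/
noncomputable def Smat (m : ℕ) : Matrix (Fin m) (Fin m) ℝ :=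
  (2 : ℝ)⁻¹ • (IinvMat m - (IinvMat m)ᵀ)

/-- The all-ones vector `e ∈ ℝ^m`. -/
def eVec (m : ℕ) : Fin m → ℝ := fun _ => 1

/-! ### Auxiliary lemmas -/

lemma sincFn_neg (t : ℝ) : sincFn (-t) = sincFn t := by
  unfold sincFn
  rcases eq_or_ne t 0 with h | h
  · simp [h]
  · rw [if_neg (neg_ne_zero.mpr h), if_neg h, mul_neg, Real.sin_neg, neg_div_neg_eq]

lemma integral_sincFn_neg (a : ℝ) :
    ∫ t in (0:ℝ)..(-a), sincFn t = -∫ t in (0:ℝ)..a, sincFn t := by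
  have h1 : ∫ t in (0:ℝ)..a, sincFn t = ∫ t in (0:ℝ)..a, sincFn (-t) := by
    simp only [sincFn_neg]
  rw [h1, intervalIntegral.integral_comp_neg, neg_zero,
    intervalIntegral.integral_symm]

lemma Iinv_add_transpose (m : ℕ) :
    IinvMat m + (IinvMat m)ᵀ = vecMulVec (eVec m) (eVec m) := by
  ext k l
  have h : ((l : ℝ) - (k : ℝ)) = -(((k : ℝ) - (l : ℝ))) := by ring
  simp only [Matrix.add_apply, Matrix.transpose_apply, IinvMat, vecMulVec_apply, eVec]
  rw [h, integral_sincFn_neg]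
  ring

lemma vecMulVec_mulVec' {m : ℕ} (u v x : Fin m → ℝ) :
    (vecMulVec u v) *ᵥ x = (v ⬝ᵥ x) • u := by
  ext k
  simp only [Matrix.mulVec, dotProduct, vecMulVec_apply, Pi.smul_apply, smul_eq_mul,
    Finset.sum_mul]
  exact Finset.sum_congr rfl fun j _ => by ring

lemma mul_vecMulVec {m : ℕ} (M : Matrix (Fin m) (Fin m) ℝ) (u v : Fin m → ℝ) :
    M * vecMulVec u v = vecMulVec (M *ᵥ u) v := by
  ext k l
  simp only [Matrix.mul_apply, vecMulVec_apply, Matrix.mulVec, dotProduct,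
    Finset.sum_mul]
  exact Finset.sum_congr rfl fun j _ => by ring

lemma smul_vecMulVec {m : ℕ} (c : ℝ) (u v : Fin m → ℝ) :
    c • vecMulVec u v = vecMulVec (c • u) v := by
  ext k l
  simp only [Matrix.smul_apply, vecMulVec_apply, Pi.smul_apply, smul_eq_mul]
  ring

lemma dot_transpose_quad {m : ℕ} (M : Matrix (Fin m) (Fin m) ℝ) (x : Fin m → ℝ) :
    x ⬝ᵥ Mᵀ *ᵥ x = x ⬝ᵥ M *ᵥ x := by
  rw [Matrix.dotProduct_mulVec, Matrix.vecMul_transpose, dotProduct_comm]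

lemma quad_Iinv {m : ℕ} (x : Fin m → ℝ) :
    x ⬝ᵥ (IinvMat m) *ᵥ x = (eVec m ⬝ᵥ x) ^ 2 / 2 := by
  have key : x ⬝ᵥ (IinvMat m + (IinvMat m)ᵀ) *ᵥ x = (eVec m ⬝ᵥ x) ^ 2 := by
    rw [Iinv_add_transpose, vecMulVec_mulVec', dotProduct_smul, smul_eq_mul,
      dotProduct_comm]
    ring
  rw [Matrix.add_mulVec, dotProduct_add, dot_transpose_quad] at key
  linarith

lemma quad_diag {m : ℕ} (g x : Fin m → ℝ) :
    x ⬝ᵥ (Matrix.diagonal g) *ᵥ x = ∑ j, g j * x j ^ 2 := by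
  simp only [dotProduct, Matrix.mulVec_diagonal]
  exact Finset.sum_congr rfl fun j _ => by ring

lemma sum_gx_pos {m : ℕ} {g x : Fin m → ℝ} (hg : ∀ j, 0 < g j) (hx : x ≠ 0) :
    0 < ∑ j, g j * x j ^ 2 := by
  obtain ⟨j0, hj0⟩ : ∃ j, x j ≠ 0 := by
    by_contra h
    push_neg at h
    exact hx (funext h)
  apply Finset.sum_pos' (fun j _ => mul_nonneg (hg j).le (sq_nonneg _))
  exact ⟨j0, Finset.mem_univ _, mul_pos (hg j0) (by positivity)⟩

lemma isUnit_of_quad_pos {m : ℕ} (M : Matrix (Fin m) (Fin m) ℝ)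
    (h : ∀ x, x ≠ 0 → 0 < x ⬝ᵥ M *ᵥ x) : IsUnit M := by
  rw [Matrix.isUnit_iff_isUnit_det, isUnit_iff_ne_zero]
  intro hdet
  obtain ⟨v, hv, hMv⟩ := Matrix.exists_mulVec_eq_zero_iff.mpr hdet
  have := h v hv
  rw [hMv, dotProduct_zero] at this
  exact lt_irrefl 0 this

lemma eval_charpoly' {n : ℕ} (M : Matrix (Fin n) (Fin n) ℝ) (x : ℝ) :
    M.charpoly.eval x = (x • (1 : Matrix (Fin n) (Fin n) ℝ) - M).det := by
  have h0 : M.charpoly.eval x = Polynomial.evalRingHom x M.charpoly := rfl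
  rw [h0, Matrix.charpoly, RingHom.map_det]
  congr 1
  ext i j
  by_cases h : i = j
  · subst h
    simp [Matrix.charmatrix_apply_eq, Matrix.one_apply_eq]
  · simp [Matrix.charmatrix_apply_ne _ _ _ h, Matrix.one_apply_ne h]

open Polynomial in
lemma charpoly_one_add_vecMulVec {n : ℕ} (hn : 1 ≤ n) (u v : Fin n → ℝ) :
    (1 + vecMulVec u v).charpoly = (X - 1) ^ (n - 1) * (X - C (1 + v ⬝ᵥ u)) := by
  apply Polynomial.eq_of_infinite_eval_eq
  apply Set.Infinite.mono (s := {(1 : ℝ)}ᶜ)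
  swap
  · exact (Set.finite_singleton (1 : ℝ)).infinite_compl
  intro x hx
  have hx1 : x - 1 ≠ 0 := sub_ne_zero.mpr hx
  obtain ⟨k, rfl⟩ : ∃ k, n = k + 1 := ⟨n - 1, (Nat.succ_pred_eq_of_pos hn).symm⟩
  simp only [Set.mem_setOf_eq]
  rw [eval_charpoly']
  have hfac : x • (1 : Matrix (Fin (k+1)) (Fin (k+1)) ℝ) - (1 + vecMulVec u v)
      = (x - 1) • (1 + vecMulVec (-(x - 1)⁻¹ • u) v) := by
    ext i j
    by_cases h : i = j
    · subst h
      simp only [Matrix.sub_apply, Matrix.add_apply, Matrix.smul_apply, Matrix.one_apply_eq,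
        vecMulVec_apply, Pi.smul_apply, smul_eq_mul]
      field_simp
      ring
    · simp only [Matrix.sub_apply, Matrix.add_apply, Matrix.smul_apply, Matrix.one_apply_ne h,
        vecMulVec_apply, Pi.smul_apply, smul_eq_mul]
      field_simp
      ring
  rw [hfac, Matrix.det_smul, vecMulVec_eq (ι := Unit), Matrix.det_one_add_replicateCol_mul_replicateRow]
  have hdot : v ⬝ᵥ (-(x - 1)⁻¹ • u) = -(x - 1)⁻¹ * (v ⬝ᵥ u) := by
    rw [dotProduct_smul, smul_eq_mul]
  rw [hdot]
  simp only [eval_mul, eval_pow, eval_sub, eval_X, eval_one, eval_C, Fintype.card_fin,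
    Nat.add_sub_cancel]
  have hps : (x - 1) ^ (k + 1) = (x - 1) ^ k * (x - 1) := pow_succ _ _
  rw [hps]
  field_simp
  ring

lemma final_bounds {ω zz : ℝ} (hω0 : 0 < ω) (hω1 : ω < 1) (hz0 : 0 < zz) (hz2 : zz < 2) :
    2 / (2 - ω * zz) ∈ Set.Ico (1 : ℝ) (1 / (1 - ω)) := by
  have hden : 0 < 2 - ω * zz := by nlinarith
  constructor
  · rw [le_div_iff₀ hden]
    nlinarith
  · rw [div_lt_div_iff₀ hden (by linarith)]
    nlinarith

set_option maxHeartbeats 1000000 in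
open Polynomial in
theorem stmt9 (m : ℕ) (hm : 1 ≤ m) (d : Fin m → ℝ) (hd : ∀ j, 0 < d j)
    (ω μ : ℝ) (hω : ω ∈ Set.Ioo (0 : ℝ) 1) (hμ : 0 < μ) :
    let D : Matrix (Fin m) (Fin m) ℝ := Matrix.diagonal d
    let Sω : Matrix (Fin m) (Fin m) ℝ :=
      IinvMat m - (ω / 2) • Matrix.vecMulVec (eVec m) (eVec m)
    let P : Matrix (Fin m) (Fin m) ℝ := 1 + μ • (Sω * D)
    let A : Matrix (Fin m) (Fin m) ℝ := 1 + μ • (IinvMat m * D)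
    let z : ℝ := eVec m ⬝ᵥ (μ⁻¹ • D⁻¹ + IinvMat m)⁻¹.mulVec (eVec m)
    IsUnit P ∧ IsUnit A ∧ z ∈ Set.Ico (0 : ℝ) 2 ∧
      (P⁻¹ * A).charpoly = (X - 1) ^ (m - 1) * (X - C (2 / (2 - ω * z))) ∧
      2 / (2 - ω * z) ∈ Set.Ico (1 : ℝ) (1 / (1 - ω)) := by
  intro D Sω P A z
  obtain ⟨hω0, hω1⟩ := hω
  -- basic facts about D
  have hdet_D : D.det = ∏ j, d j := Matrix.det_diagonal
  have hdet_D_ne : D.det ≠ 0 := by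
    rw [hdet_D]
    exact ne_of_gt (Finset.prod_pos fun j _ => hd j)
  have hD_unit : IsUnit D.det := isUnit_iff_ne_zero.mpr hdet_D_ne
  -- D⁻¹ is diagonal of inverses
  have hDinv : D⁻¹ = Matrix.diagonal fun j => (d j)⁻¹ := by
    apply Matrix.inv_eq_right_inv
    rw [show D = Matrix.diagonal d from rfl, Matrix.diagonal_mul_diagonal]
    ext i j
    rcases eq_or_ne i j with h | h
    · subst h; simp [mul_inv_cancel₀ (hd i).ne']
    · simp [Matrix.diagonal_apply_ne _ h, Matrix.one_apply_ne h]
  -- the diagonal matrix μ⁻¹ • D⁻¹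
  set g : Fin m → ℝ := fun j => μ⁻¹ * (d j)⁻¹ with hg_def
  have hg_pos : ∀ j, 0 < g j := fun j => by
    have := hd j
    positivity
  have hmuDinv : μ⁻¹ • D⁻¹ = Matrix.diagonal g := by
    rw [hDinv]
    ext i j
    by_cases h : i = j <;> simp [h, Matrix.diagonal, hg_def]
  -- define B and Cm
  set B : Matrix (Fin m) (Fin m) ℝ := μ⁻¹ • D⁻¹ + IinvMat m with hB_def
  set Cm : Matrix (Fin m) (Fin m) ℝ := μ⁻¹ • D⁻¹ + Sω with hCm_def
  -- quadratic forms
  have quadB : ∀ x : Fin m → ℝ, x ⬝ᵥ B *ᵥ x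
      = (∑ j, g j * x j ^ 2) + (eVec m ⬝ᵥ x) ^ 2 / 2 := by
    intro x
    rw [hB_def, Matrix.add_mulVec, dotProduct_add, hmuDinv, quad_diag, quad_Iinv]
  have quadCm : ∀ x : Fin m → ℝ, x ⬝ᵥ Cm *ᵥ x
      = (∑ j, g j * x j ^ 2) + (1 - ω) * (eVec m ⬝ᵥ x) ^ 2 / 2 := by
    intro x
    rw [hCm_def, Matrix.add_mulVec, dotProduct_add, hmuDinv, quad_diag]
    have hq : x ⬝ᵥ Sω *ᵥ x = (eVec m ⬝ᵥ x) ^ 2 / 2 - ω / 2 * (eVec m ⬝ᵥ x) ^ 2 := by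
      rw [show Sω = IinvMat m - (ω / 2) • Matrix.vecMulVec (eVec m) (eVec m) from rfl,
        Matrix.sub_mulVec, dotProduct_sub, quad_Iinv, Matrix.smul_mulVec,
        dotProduct_smul, vecMulVec_mulVec', dotProduct_smul]
      simp only [smul_eq_mul, dotProduct_comm x (eVec m)]
      ring
    rw [hq]
    ring
  have hB_unit : IsUnit B := by
    apply isUnit_of_quad_pos
    intro x hx
    rw [quadB]
    have := sum_gx_pos hg_pos hx
    nlinarith [sq_nonneg (eVec m ⬝ᵥ x)]
  have hCm_unit : IsUnit Cm := by
    apply isUnit_of_quad_pos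
    intro x hx
    rw [quadCm]
    have := sum_gx_pos hg_pos hx
    nlinarith [sq_nonneg (eVec m ⬝ᵥ x)]
  have hB_det : IsUnit B.det := (Matrix.isUnit_iff_isUnit_det B).mp hB_unit
  have hCm_det : IsUnit Cm.det := (Matrix.isUnit_iff_isUnit_det Cm).mp hCm_unit
  -- factorizations P = Cm * (μ • D), A = B * (μ • D)
  have hDinvD : D⁻¹ * D = 1 := Matrix.nonsing_inv_mul D hD_unit
  have hfacP : P = Cm * (μ • D) := by
    show 1 + μ • (Sω * D) = (μ⁻¹ • D⁻¹ + Sω) * (μ • D)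
    rw [Matrix.add_mul, Matrix.mul_smul, Matrix.mul_smul, Matrix.smul_mul,
      hDinvD, smul_smul, mul_inv_cancel₀ (ne_of_gt hμ), one_smul]
  have hfacA : A = B * (μ • D) := by
    show 1 + μ • (IinvMat m * D) = (μ⁻¹ • D⁻¹ + IinvMat m) * (μ • D)
    rw [Matrix.add_mul, Matrix.mul_smul, Matrix.mul_smul, Matrix.smul_mul,
      hDinvD, smul_smul, mul_inv_cancel₀ (ne_of_gt hμ), one_smul]
  have hmuD_unit : IsUnit (μ • D) := by
    rw [Matrix.isUnit_iff_isUnit_det, Matrix.det_smul, isUnit_iff_ne_zero]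
    exact mul_ne_zero (pow_ne_zero _ (ne_of_gt hμ)) hdet_D_ne
  have hP_unit : IsUnit P := by rw [hfacP]; exact hCm_unit.mul hmuD_unit
  have hA_unit : IsUnit A := by rw [hfacA]; exact hB_unit.mul hmuD_unit
  have hP_det : IsUnit P.det := (Matrix.isUnit_iff_isUnit_det P).mp hP_unit
  -- e is nonzero
  have he_ne : eVec m ≠ 0 := by
    intro h
    have := congrFun h ⟨0, hm⟩
    simp [eVec] at this
  -- z facts
  set y : Fin m → ℝ := B⁻¹ *ᵥ eVec m with hy_def
  have hBy : B *ᵥ y = eVec m := by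
    rw [hy_def, Matrix.mulVec_mulVec, Matrix.mul_nonsing_inv B hB_det, Matrix.one_mulVec]
  have hz_eq : z = eVec m ⬝ᵥ y := rfl
  have hy_ne : y ≠ 0 := by
    intro h
    rw [h, Matrix.mulVec_zero] at hBy
    exact he_ne hBy.symm
  have hyz : y ⬝ᵥ B *ᵥ y = z := by
    rw [hBy, dotProduct_comm, hz_eq]
  have hz_quad : (∑ j, g j * y j ^ 2) + z ^ 2 / 2 = z := by
    rw [quadB, ← hz_eq] at hyz
    linarith [hyz]
  have hq_pos : 0 < ∑ j, g j * y j ^ 2 := sum_gx_pos hg_pos hy_ne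
  have hz_pos : 0 < z := by nlinarith
  have hz_lt2 : z < 2 := by nlinarith
  -- the denominator
  have hden_pos : 0 < 2 - ω * z := by nlinarith
  have hden_ne : 2 - ω * z ≠ 0 := ne_of_gt hden_pos
  -- relation between Cm⁻¹ and z
  set w : Fin m → ℝ := Cm⁻¹ *ᵥ eVec m with hw_def
  have hCw : Cm *ᵥ w = eVec m := by
    rw [hw_def, Matrix.mulVec_mulVec, Matrix.mul_nonsing_inv Cm hCm_det, Matrix.one_mulVec]
  set vval : ℝ := eVec m ⬝ᵥ w with hv_def
  have hBw : B *ᵥ w = (1 + ω / 2 * vval) • eVec m := by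
    have hBC : B = Cm + (ω / 2) • Matrix.vecMulVec (eVec m) (eVec m) := by
      rw [hB_def, hCm_def,
        show Sω = IinvMat m - (ω / 2) • Matrix.vecMulVec (eVec m) (eVec m) from rfl]
      abel
    rw [hBC, Matrix.add_mulVec, hCw, Matrix.smul_mulVec, vecMulVec_mulVec', ← hv_def]
    ext i
    simp only [Pi.add_apply, Pi.smul_apply, smul_eq_mul, eVec]
    ring
  have hw_eq : w = (1 + ω / 2 * vval) • y := by
    have h1 : B⁻¹ *ᵥ (B *ᵥ w) = w := by
      rw [Matrix.mulVec_mulVec, Matrix.nonsing_inv_mul B hB_det, Matrix.one_mulVec]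
    rw [hBw] at h1
    rw [← h1, Matrix.mulVec_smul, hy_def]
  have hvz : vval = (1 + ω / 2 * vval) * z := by
    calc vval = eVec m ⬝ᵥ w := hv_def
      _ = (1 + ω / 2 * vval) * (eVec m ⬝ᵥ y) := by
          rw [hw_eq, dotProduct_smul, smul_eq_mul]
      _ = (1 + ω / 2 * vval) * z := by rw [← hz_eq]
  have hlam : 1 + ω / 2 * vval = 2 / (2 - ω * z) := by
    rw [eq_div_iff hden_ne]
    nlinarith [hvz]
  -- charpoly computation
  have hPinvP : P⁻¹ * P = 1 := Matrix.nonsing_inv_mul P hP_det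
  have heeD : Matrix.vecMulVec (eVec m) (eVec m) * D = Matrix.vecMulVec (eVec m) d := by
    ext k l
    simp only [Matrix.mul_apply, vecMulVec_apply, eVec, one_mul]
    rw [show D = Matrix.diagonal d from rfl]
    simp [Matrix.diagonal_apply, Finset.sum_ite_eq']
  have hA_eq : A = P + (μ * (ω / 2)) • Matrix.vecMulVec (eVec m) d := by
    have hsub : A - P = (μ * (ω / 2)) • Matrix.vecMulVec (eVec m) d := by
      show (1 + μ • (IinvMat m * D)) - (1 + μ • (Sω * D)) = _
      rw [show Sω = IinvMat m - (ω / 2) • Matrix.vecMulVec (eVec m) (eVec m) from rfl]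
      rw [Matrix.sub_mul, Matrix.smul_mul, heeD, smul_sub, smul_smul]
      abel
    have := hsub
    rw [sub_eq_iff_eq_add] at this
    rw [this]
    abel
  set U : Fin m → ℝ := (μ * (ω / 2)) • (P⁻¹ *ᵥ eVec m) with hU_def
  have hPA : P⁻¹ * A = 1 + Matrix.vecMulVec U d := by
    rw [hA_eq, Matrix.mul_add, hPinvP, Matrix.mul_smul, mul_vecMulVec, smul_vecMulVec, hU_def]
  -- the scalar d ⬝ᵥ U
  have hPinv_eq : P⁻¹ = (μ • D)⁻¹ * Cm⁻¹ := by
    rw [hfacP, Matrix.mul_inv_rev]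
  have hmuDinv2 : (μ • D)⁻¹ = Matrix.diagonal fun j => (μ * d j)⁻¹ := by
    have hmd : μ • D = Matrix.diagonal fun j => μ * d j := by
      rw [show D = Matrix.diagonal d from rfl]
      ext i j
      by_cases h : i = j <;>
        simp [h, Matrix.smul_apply, Matrix.diagonal_apply_eq, Matrix.diagonal_apply_ne]
    apply Matrix.inv_eq_right_inv
    rw [hmd, Matrix.diagonal_mul_diagonal]
    ext i j
    rcases eq_or_ne i j with h | h
    · subst h
      simp only [Matrix.diagonal_apply_eq, Matrix.one_apply_eq]
      exact mul_inv_cancel₀ (mul_pos hμ (hd i)).ne'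
    · simp [Matrix.diagonal_apply_ne _ h, Matrix.one_apply_ne h]
  have hdU : d ⬝ᵥ U = ω / 2 * vval := by
    rw [hU_def, dotProduct_smul, smul_eq_mul, hPinv_eq, ← Matrix.mulVec_mulVec,
      ← hw_def, hmuDinv2]
    have hsum : d ⬝ᵥ (Matrix.diagonal fun j => (μ * d j)⁻¹) *ᵥ w = μ⁻¹ * vval := by
      simp only [dotProduct, Matrix.mulVec_diagonal, hv_def, eVec, Finset.mul_sum]
      refine Finset.sum_congr rfl fun j _ => ?_
      have hdj := (hd j).ne'
      have hμ' := hμ.ne'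
      field_simp
    rw [hsum]
    field_simp
  have hkey : 1 + d ⬝ᵥ U = 2 / (2 - ω * z) := by rw [hdU, hlam]
  refine ⟨hP_unit, hA_unit, ⟨le_of_lt hz_pos, hz_lt2⟩, ?_, ?_⟩
  · rw [hPA, charpoly_one_add_vecMulVec hm, hkey]
  · exact final_bounds hω0 hω1 hz_pos hz_lt2
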